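/- arXiv:2001.09633 — 3 statements merged into one kernel-verified Lean document; each statement's English description precedes it below -/
import Mathlib

section
/- If G is a K_{1,r}-free graph with r ≥ 3, then for every positive integer k, ι'_k(G) ≤ (r − 2)(ι_k(G) − 1) + 1. -/
open SimpleGraph

variable {V : Type*}

/-- The closed neighborhood `N[S]` of a set of vertices. -/
def closedNbhd (G : SimpleGraph V) (S : Set V) : Set V :=
  {v | v ∈ S ∨ ∃ u ∈ S, G.Adj u v}

/-- The open neighborhood `N(S)` of a set of vertices. -/
def openNbhd (G : SimpleGraph V) (S : Set V) : Set V :=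
  {v | ∃ u ∈ S, G.Adj u v}

/-- A set is independent if no two of its vertices are adjacent. -/
def IsIndep (G : SimpleGraph V) (S : Set V) : Prop :=
  S.Pairwise fun u w => ¬ G.Adj u w

/-- `S` is `K_k`-isolating: `G - N[S]` contains no clique of size `k`. -/
def IsIsolating (G : SimpleGraph V) (k : ℕ) (S : Set V) : Prop :=
  ∀ T : Finset V, (↑T : Set V) ∩ closedNbhd G S = ∅ → G.IsClique ↑T → T.card ≠ k

/-- The `K_k`-isolation number `ι_k(G)`. -/
noncomputable def iota [Fintype V] (G : SimpleGraph V) (k : ℕ) : ℕ :=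
  sInf {n | ∃ S : Finset V, S.card = n ∧ IsIsolating G k ↑S}

/-- The independent `K_k`-isolation number `ι'_k(G)`. -/
noncomputable def iota' [Fintype V] (G : SimpleGraph V) (k : ℕ) : ℕ :=
  sInf {n | ∃ S : Finset V, S.card = n ∧ IsIsolating G k ↑S ∧ IsIndep G ↑S}

/-- A dominating set: every vertex lies in `N[S]`. -/
def IsDominating (G : SimpleGraph V) (S : Set V) : Prop :=
  ∀ v, v ∈ closedNbhd G S

/-- The domination number `γ(G)`. -/
noncomputable def gammaNum [Fintype V] (G : SimpleGraph V) : ℕ :=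
  sInf {n | ∃ S : Finset V, S.card = n ∧ IsDominating G ↑S}

/-- The independent domination number `i(G)`. -/
noncomputable def iNum [Fintype V] (G : SimpleGraph V) : ℕ :=
  sInf {n | ∃ S : Finset V, S.card = n ∧ IsDominating G ↑S ∧ IsIndep G ↑S}

/-- `G` is `K_{1,r}`-free: no induced subgraph isomorphic to the star `K_{1,r}`. -/
def K1rFree (G : SimpleGraph V) (r : ℕ) : Prop :=
  IsEmpty (completeBipartiteGraph (Fin 1) (Fin r) ↪g G)

/-- Degree of `v` inside the vertex subset `T`. -/
def degIn [DecidableEq V] (G : SimpleGraph V) [DecidableRel G.Adj] (T : Finset V) (v : V) : ℕ :=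
  (T.filter (G.Adj v)).card

/-! Replace a minimum `K_k`-isolating set `D` vertex by vertex by an independent set `I` with
`N[D] ⊆ N[I]`; such an `I` is again isolating. Start with `I = {v}` for some `v ∈ D`. Each further
vertex `u ∈ D` costs at most `r - 2` new vertices: if `u ∉ N[I]`, add `u`; if `u ∈ I`, add
nothing; otherwise `u` has a neighbour `w ∈ I`, and a maximal independent set `M` of the
not yet dominated vertices of `N[u]` is added. These lie in `N(u)` and have no neighbour in `I`,
so `M ∪ {w}` is independent in `N(u)` and `K_{1,r}`-freeness gives `|M| + 1 ≤ r - 1`. -/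

section

variable {G : SimpleGraph V}

lemma subset_closedNbhd (S : Set V) : S ⊆ closedNbhd G S := fun _ => Or.inl

lemma closedNbhd_mono {S T : Set V} (h : S ⊆ T) : closedNbhd G S ⊆ closedNbhd G T := by
  rintro v (hv | ⟨u, hu, huv⟩)
  · exact Or.inl (h hv)
  · exact Or.inr ⟨u, h hu, huv⟩

lemma closedNbhd_union (S T : Set V) :
    closedNbhd G (S ∪ T) = closedNbhd G S ∪ closedNbhd G T := by
  ext v
  simp only [closedNbhd, Set.mem_union, Set.mem_ofPred_eq]
  grind

lemma IsIndep.insert_of_notMem_closedNbhd {S : Set V} {u : V} (hS : IsIndep G S)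
    (hu : u ∉ closedNbhd G S) : IsIndep G (insert u S) :=
  Set.Pairwise.insert hS fun w hw _ =>
    ⟨fun h => hu (Or.inr ⟨w, hw, h.symm⟩), fun h => hu (Or.inr ⟨w, hw, h⟩)⟩

lemma IsIndep.union_of_disjoint_closedNbhd {S T : Set V} (hS : IsIndep G S) (hT : IsIndep G T)
    (hST : Disjoint T (closedNbhd G S)) : IsIndep G (S ∪ T) :=
  Set.pairwise_union.2 ⟨hS, hT, fun _ ha _ hb _ =>
    ⟨fun h => hST.notMem_of_mem_left hb (Or.inr ⟨_, ha, h⟩),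
      fun h => hST.notMem_of_mem_left hb (Or.inr ⟨_, ha, h.symm⟩)⟩⟩

lemma exists_isIndep_subset_closedNbhd (A : Finset V) :
    ∃ M ⊆ A, IsIndep G ↑M ∧ ↑A ⊆ closedNbhd G ↑M := by
  classical
  obtain ⟨M, hM, hmax⟩ := (A.powerset.filter fun M : Finset V => IsIndep G ↑M).exists_max_image
    Finset.card ⟨∅, Finset.mem_filter.2 ⟨Finset.empty_mem_powerset A, by simp [IsIndep]⟩⟩
  rw [Finset.mem_filter, Finset.mem_powerset] at hM
  refine ⟨M, hM.1, hM.2, fun u hu => ?_⟩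
  by_contra huM
  have huM' : u ∉ M := fun h => huM (subset_closedNbhd _ h)
  have hbigger := hmax (insert u M) <| by
    rw [Finset.mem_filter, Finset.mem_powerset, Finset.coe_insert]
    exact ⟨Finset.insert_subset hu hM.1, hM.2.insert_of_notMem_closedNbhd huM⟩
  rw [Finset.card_insert_of_notMem huM'] at hbigger
  omega

lemma K1rFree.card_lt_of_isIndep {r : ℕ} (hfree : K1rFree G r) {v : V} {L : Finset V}
    (hadj : ∀ x ∈ L, G.Adj v x) (hL : IsIndep G ↑L) : L.card < r := by
  by_contra! hrL
  obtain ⟨f⟩ : Nonempty (Fin r ↪ L) := by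
    rw [Function.Embedding.nonempty_iff_card_le]
    simpa using hrL
  have hleaf : ∀ i, G.Adj v (f i) := fun i => hadj _ (f i).2
  have hleaves : ∀ i j, ¬ G.Adj (f i) (f j) := fun i j h =>
    hL (f i).2 (f j).2 (fun hij => h.ne hij) h
  refine hfree.false ⟨⟨Sum.elim (fun _ => v) (fun i => f i), ?_⟩, ?_⟩
  · rintro (a | a) (b | b) h
    · exact congrArg Sum.inl (Subsingleton.elim a b)
    · exact absurd h (hleaf b).ne
    · exact absurd h (hleaf a).ne'
    · exact congrArg Sum.inr (f.injective (Subtype.ext h))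
  · rintro (a | a) (b | b)
    · exact iff_of_false G.irrefl (by simp)
    · exact iff_of_true (hleaf b) (by simp)
    · exact iff_of_true (hleaf a).symm (by simp)
    · exact iff_of_false (hleaves a b) (by simp)

lemma IsIsolating.mono {k : ℕ} {S T : Set V} (hS : IsIsolating G k S)
    (hST : closedNbhd G S ⊆ closedNbhd G T) : IsIsolating G k T := fun X hX =>
  hS X <| Set.subset_empty_iff.1 <| hX ▸ Set.inter_subset_inter_right _ hST

lemma isIsolating_univ {k : ℕ} (hk : k ≠ 0) : IsIsolating G k Set.univ := by
  intro T hT _ hcard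
  rw [Set.inter_eq_left.2 fun x _ => subset_closedNbhd _ (Set.mem_univ x),
    Finset.coe_eq_empty] at hT
  exact hk (hcard ▸ hT ▸ Finset.card_empty)

section Fintype

variable [Fintype V]

lemma exists_card_eq_iota {k : ℕ} (hk : k ≠ 0) :
    ∃ D : Finset V, D.card = iota G k ∧ IsIsolating G k ↑D :=
  Nat.sInf_mem (s := {n | ∃ S : Finset V, S.card = n ∧ IsIsolating G k ↑S})
    ⟨_, Finset.univ, rfl, by simpa using isIsolating_univ hk⟩

lemma iota'_le_card {k : ℕ} {I : Finset V} (hiso : IsIsolating G k ↑I) (hI : IsIndep G ↑I) :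
    iota' G k ≤ I.card :=
  Nat.sInf_le ⟨I, rfl, hiso, hI⟩

lemma K1rFree.exists_isIndep_extend {r : ℕ} (hfree : K1rFree G r) (hr : 3 ≤ r) {I : Finset V}
    (hI : IsIndep G ↑I) (v : V) :
    ∃ J : Finset V, IsIndep G ↑J ∧ closedNbhd G ↑I ∪ closedNbhd G {v} ⊆ closedNbhd G ↑J ∧
      J.card ≤ I.card + (r - 2) := by
  classical
  by_cases hvI : v ∈ closedNbhd G ↑I
  swap
  · refine ⟨insert v I, by simpa using hI.insert_of_notMem_closedNbhd hvI, ?_, ?_⟩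
    · rw [Finset.coe_insert, Set.insert_eq, closedNbhd_union, Set.union_comm]
    · have := Finset.card_insert_le v I
      omega
  rcases hvI with hvI | ⟨w, hwI, hwv⟩
  · exact ⟨I, hI, Set.union_subset subset_rfl (closedNbhd_mono (by simpa using hvI)), by omega⟩
  obtain ⟨M, hMA, hM, hAM⟩ := exists_isIndep_subset_closedNbhd (G := G)
    (Finset.univ.filter fun u => u ∈ closedNbhd G {v} ∧ u ∉ closedNbhd G ↑I)
  have hMA' : ∀ x ∈ M, x ∈ closedNbhd G {v} ∧ x ∉ closedNbhd G ↑I := fun x hx => by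
    simpa using hMA hx
  have hMI : Disjoint (↑M : Set V) (closedNbhd G ↑I) :=
    Set.disjoint_left.2 fun x hx => (hMA' x hx).2
  have hIM : IsIndep G ↑(I ∪ M) := by
    simpa using hI.union_of_disjoint_closedNbhd hM hMI
  have hMcard : M.card + 1 < r := by
    have hwM : w ∉ M := fun h => (hMA' w h).2 (subset_closedNbhd _ hwI)
    have hadj : ∀ x ∈ insert w M, G.Adj v x := by
      simp only [Finset.mem_insert, forall_eq_or_imp]
      refine ⟨hwv.symm, fun x hx => ?_⟩
      rcases (hMA' x hx).1 with rfl | ⟨_, rfl, hvx⟩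
      · exact absurd (Or.inr ⟨w, hwI, hwv⟩) (hMA' x hx).2
      · exact hvx
    have hind : IsIndep G ↑(insert w M) := by
      refine Set.Pairwise.mono ?_ hIM
      rw [Finset.coe_insert, Finset.coe_union]
      exact Set.insert_subset (Or.inl hwI) Set.subset_union_right
    simpa [Finset.card_insert_of_notMem hwM] using hfree.card_lt_of_isIndep hadj hind
  refine ⟨I ∪ M, hIM, ?_, ?_⟩
  · rintro x (hx | hx)
    · exact closedNbhd_mono (by simp) hx
    by_cases hxI : x ∈ closedNbhd G ↑I
    · exact closedNbhd_mono (by simp) hxI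
    · exact closedNbhd_mono (by simp) (hAM (by simpa using And.intro hx hxI))
  · have := Finset.card_union_le I M
    omega

lemma K1rFree.exists_isIndep_closedNbhd_superset {r : ℕ} (hfree : K1rFree G r) (hr : 3 ≤ r)
    {I : Finset V} (hI : IsIndep G ↑I) (S : Finset V) :
    ∃ J : Finset V, IsIndep G ↑J ∧ closedNbhd G ↑I ∪ closedNbhd G ↑S ⊆ closedNbhd G ↑J ∧
      J.card ≤ I.card + (r - 2) * S.card := by
  classical
  induction S using Finset.induction_on with
  | empty => exact ⟨I, hI, by simp [closedNbhd], by simp⟩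
  | insert a S haS ih =>
    obtain ⟨J₁, hJ₁, hcov₁, hcard₁⟩ := ih
    obtain ⟨J₂, hJ₂, hcov₂, hcard₂⟩ := hfree.exists_isIndep_extend hr hJ₁ a
    refine ⟨J₂, hJ₂, ?_, ?_⟩
    · rw [Finset.coe_insert, Set.insert_eq, closedNbhd_union]
      rintro x (hx | hx | hx)
      · exact hcov₂ (Or.inl (hcov₁ (Or.inl hx)))
      · exact hcov₂ (Or.inr hx)
      · exact hcov₂ (Or.inl (hcov₁ (Or.inr hx)))
    · rw [Finset.card_insert_of_notMem haS, mul_add, mul_one]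
      omega

end Fintype

end

/-- For K_{1,r}-free graphs, ι'_k(G) ≤ (r − 2)(ι_k(G) − 1) + 1. -/
theorem stmt_4 [Fintype V] (G : SimpleGraph V) (r : ℕ) (hr : 3 ≤ r)
    (hfree : K1rFree G r) (k : ℕ) (hk : 0 < k) :
    iota' G k ≤ (r - 2) * (iota G k - 1) + 1 := by
  classical
  obtain ⟨D, hDcard, hD⟩ := exists_card_eq_iota (G := G) hk.ne'
  rcases D.eq_empty_or_nonempty with rfl | ⟨v, hv⟩
  · exact (iota'_le_card hD (by simp [IsIndep])).trans (by simp)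
  obtain ⟨I, hI, hcov, hcard⟩ :=
    hfree.exists_isIndep_closedNbhd_superset hr (I := {v}) (by simp [IsIndep]) (D.erase v)
  have hDI : closedNbhd G ↑D ⊆ closedNbhd G ↑I := by
    rw [← Finset.insert_erase hv, Finset.coe_insert, Set.insert_eq, closedNbhd_union]
    simpa using hcov
  calc iota' G k ≤ I.card := iota'_le_card (hD.mono hDI) hI
    _ ≤ 1 + (r - 2) * (D.card - 1) := by simpa [Finset.card_erase_of_mem hv] using hcard
    _ = (r - 2) * (iota G k - 1) + 1 := by rw [hDcard, add_comm]
end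

section
/- For the graph G(t,s) with s + t − 1 ≥ k (positive integers s, t, k), the independent K_k-isolation number satisfies ι'_k(G(t,s)) = s(t − 1) + 1. -/
/-!
An independent set `S` contains at most one clique vertex `x_{i₀}`. A copy `K^{i,i'}_k` with
`xᵢ ∉ S` survives in `G − N[S]` unless it meets `S`, so `S` meets each of the `s(t − 1)` copies
with `i ≠ i₀`, and it contains one further vertex: `x_{i₀}` itself, or else a vertex of
`K^{i₀,1}_k`. Conversely `x_{i₀}` together with the `y_{i,i'}`, `i ≠ i₀`, is independent, and
what it leaves of `G` is `s` disjoint copies of `K_{k−1}`.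
-/

open SimpleGraph

variable {V : Type*}

/-- Vertices of `G(t,s)`: `inl i` is the clique vertex `xᵢ`; `inr (i, i', j)` is the `j`-th
vertex of the copy `K^{i,i'}_k`, with `y_{i,i'}` being the one with `j = 0`. -/
abbrev GtsVertex (t s k : ℕ) := Fin t ⊕ Fin t × Fin s × Fin k

/-- The graph `G(t,s)`: a clique on `x₁,…,x_t` and `s·t` disjoint copies of `K_k`, with
`xᵢ` joined to the vertex `y_{i,i'}` (index `0`) of each copy `K^{i,i'}_k`. -/
def GraphGts (t s k : ℕ) : SimpleGraph (GtsVertex t s k) where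
  Adj a b := match a, b with
    | Sum.inl i, Sum.inl j => i ≠ j
    | Sum.inl i, Sum.inr (a, _, c) => a = i ∧ (c : ℕ) = 0
    | Sum.inr (a, _, c), Sum.inl i => a = i ∧ (c : ℕ) = 0
    | Sum.inr (a, b, c), Sum.inr (a', b', c') => a = a' ∧ b = b' ∧ c ≠ c'
  symm := by
    constructor
    rintro (i | ⟨a, b, c⟩) (j | ⟨a', b', c'⟩) h
    · exact h.symm
    · exact h
    · exact h
    · exact ⟨h.1.symm, h.2.1.symm, h.2.2.symm⟩
  loopless := by
    constructor
    rintro (i | ⟨a, b, c⟩) h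
    · exact h rfl
    · exact h.2.2 rfl

instance (t s k : ℕ) : DecidableRel (GraphGts t s k).Adj := fun a b =>
  match a, b with
  | Sum.inl i, Sum.inl j => inferInstanceAs (Decidable (i ≠ j))
  | Sum.inl i, Sum.inr (a, _, c) => inferInstanceAs (Decidable (a = i ∧ (c : ℕ) = 0))
  | Sum.inr (a, _, c), Sum.inl i => inferInstanceAs (Decidable (a = i ∧ (c : ℕ) = 0))
  | Sum.inr (a, b, c), Sum.inr (a', b', c') =>
      inferInstanceAs (Decidable (a = a' ∧ b = b' ∧ c ≠ c'))


open Finset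

theorem IsIsolating.exists_mem_closedNbhd {G : SimpleGraph V} {k : ℕ} {S : Set V}
    (hS : IsIsolating G k S) {T : Finset V} (hT : G.IsClique ↑T) (hcard : T.card = k) :
    ∃ v ∈ T, v ∈ closedNbhd G S := by
  by_contra! h
  exact hS T (Set.eq_empty_iff_forall_notMem.2 fun v hv => h v hv.1 hv.2) hT hcard

namespace GraphGts

variable {t s k : ℕ}

def copy (i : Fin t) (j : Fin s) : Finset (GtsVertex t s k) :=
  univ.map ⟨fun c => .inr (i, j, c), fun _ _ h => by simpa using h⟩

theorem mem_copy {i : Fin t} {j : Fin s} {v : GtsVertex t s k} :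
    v ∈ copy i j ↔ ∃ c, v = .inr (i, j, c) := by
  simp only [copy, mem_map, mem_univ, true_and, eq_comm]
  rfl

theorem card_copy (i : Fin t) (j : Fin s) : (copy i j : Finset (GtsVertex t s k)).card = k := by
  simp [copy]

theorem isClique_copy (i : Fin t) (j : Fin s) :
    (GraphGts t s k).IsClique (copy i j : Finset (GtsVertex t s k)) := by
  rintro v hv w hw hvw
  obtain ⟨c, rfl⟩ := mem_copy.1 hv
  obtain ⟨c', rfl⟩ := mem_copy.1 hw
  exact ⟨rfl, rfl, fun h => hvw (h ▸ rfl)⟩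

theorem eq_of_inl_mem_of_inl_mem {S : Set (GtsVertex t s k)} (hS : IsIndep (GraphGts t s k) S)
    {i j : Fin t} (hi : .inl i ∈ S) (hj : .inl j ∈ S) : i = j := by
  by_contra h
  exact hS hi hj (by simpa using h) h

theorem exists_inr_mem_of_isIsolating {S : Set (GtsVertex t s k)}
    (hS : IsIsolating (GraphGts t s k) k S) {i : Fin t} (hi : .inl i ∉ S) (j : Fin s) :
    ∃ c, .inr (i, j, c) ∈ S := by
  obtain ⟨v, hv, hvS | ⟨u, huS, hadj⟩⟩ :=
    hS.exists_mem_closedNbhd (isClique_copy i j) (card_copy i j)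
  · obtain ⟨c, rfl⟩ := mem_copy.1 hv
    exact ⟨c, hvS⟩
  · obtain ⟨c, rfl⟩ := mem_copy.1 hv
    rcases u with i' | ⟨a, b, c'⟩
    · obtain ⟨rfl, -⟩ := hadj
      exact absurd huS hi
    · obtain ⟨rfl, rfl, -⟩ := hadj
      exact ⟨c', huS⟩

/-- One vertex `(i, j, f (i, j))` from each copy `K^{i,j}_k` with `i ≠ i₀`. -/
def transversal (i₀ : Fin t) (f : Fin t × Fin s → Fin k) : Finset (GtsVertex t s k) :=
  ((univ.erase i₀) ×ˢ univ).image fun p => .inr (p.1, p.2, f p)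

theorem mem_transversal {i₀ : Fin t} {f : Fin t × Fin s → Fin k} {v : GtsVertex t s k} :
    v ∈ transversal i₀ f ↔ ∃ i j, i ≠ i₀ ∧ v = .inr (i, j, f (i, j)) := by
  simp [transversal, eq_comm]

theorem card_transversal (i₀ : Fin t) (f : Fin t × Fin s → Fin k) :
    (transversal i₀ f).card = (t - 1) * s := by
  rw [transversal, card_image_of_injective _ fun p q h => by
    simp only [Sum.inr.injEq, Prod.mk.injEq] at h
    exact Prod.ext h.1 h.2.1]
  simp

theorem le_card_of_isIsolating_of_isIndep (ht : 0 < t) (hs : 0 < s) (hk : 0 < k)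
    {S : Finset (GtsVertex t s k)} (hiso : IsIsolating (GraphGts t s k) k ↑S)
    (hind : IsIndep (GraphGts t s k) ↑S) : s * (t - 1) + 1 ≤ S.card := by
  obtain ⟨i₀, hi₀⟩ : ∃ i₀ : Fin t, ∀ i, .inl i ∈ S → i = i₀ := by
    by_cases h : ∃ i₀ : Fin t, .inl i₀ ∈ S
    · obtain ⟨i₀, hi₀⟩ := h
      exact ⟨i₀, fun i hi => eq_of_inl_mem_of_inl_mem hind hi hi₀⟩
    · push Not at h
      exact ⟨⟨0, ht⟩, fun i hi => absurd hi (h i)⟩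
  have hhit : ∀ p : Fin t × Fin s, p.1 ≠ i₀ → ∃ c, .inr (p.1, p.2, c) ∈ S := fun p hp =>
    exists_inr_mem_of_isIsolating hiso (fun h => hp (hi₀ _ h)) p.2
  have : Nonempty (Fin k) := ⟨⟨0, hk⟩⟩
  choose! f hf using hhit
  have hsub : transversal i₀ f ⊆ S := by
    intro v hv
    obtain ⟨i, j, hi, rfl⟩ := mem_transversal.1 hv
    exact hf (i, j) hi
  obtain ⟨w, hwS, hwT⟩ : ∃ w ∈ S, w ∉ transversal i₀ f := by
    by_cases hx : .inl i₀ ∈ S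
    · exact ⟨_, hx, fun h => by simp [mem_transversal] at h⟩
    · obtain ⟨c, hc⟩ := exists_inr_mem_of_isIsolating hiso hx ⟨0, hs⟩
      exact ⟨_, hc, fun h => by simp [mem_transversal] at h⟩
  calc s * (t - 1) + 1 = (insert w (transversal i₀ f)).card := by
        rw [card_insert_of_notMem hwT, card_transversal, Nat.mul_comm]
    _ ≤ S.card := card_le_card (insert_subset hwS hsub)

/-- `x_{i₀}` together with the vertices `y_{i,j}` for `i ≠ i₀`. -/
def isolatingSet (hk : 0 < k) (i₀ : Fin t) : Finset (GtsVertex t s k) :=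
  insert (.inl i₀) (transversal i₀ fun _ => ⟨0, hk⟩)

theorem card_isolatingSet (hk : 0 < k) (i₀ : Fin t) :
    (isolatingSet (s := s) hk i₀).card = s * (t - 1) + 1 := by
  rw [isolatingSet, card_insert_of_notMem (by simp [mem_transversal]), card_transversal,
    Nat.mul_comm]

theorem isIndep_isolatingSet (hk : 0 < k) (i₀ : Fin t) :
    IsIndep (GraphGts t s k) ↑(isolatingSet (s := s) hk i₀) := by
  intro u hu w hw hne hadj
  simp only [isolatingSet, coe_insert, Set.mem_insert_iff, mem_coe, mem_transversal] at hu hw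
  rcases hu with rfl | ⟨a, b, ha, rfl⟩ <;> rcases hw with rfl | ⟨a', b', ha', rfl⟩
  · exact hne rfl
  · exact ha' hadj.1
  · exact ha hadj.1
  · exact hadj.2.2 rfl

theorem exists_eq_inr_of_notMem_closedNbhd_isolatingSet (hk : 0 < k) {i₀ : Fin t}
    {v : GtsVertex t s k}
    (hv : v ∉ closedNbhd (GraphGts t s k) (isolatingSet (s := s) hk i₀ : Set _)) :
    ∃ (j : Fin s) (c : Fin k), (c : ℕ) ≠ 0 ∧ v = .inr (i₀, j, c) := by
  have hx : (.inl i₀ : GtsVertex t s k) ∈ isolatingSet hk i₀ := mem_insert_self _ _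
  have hy : ∀ i j, i ≠ i₀ → (.inr (i, j, ⟨0, hk⟩) : GtsVertex t s k) ∈ isolatingSet hk i₀ :=
    fun i j hi => mem_insert_of_mem (mem_transversal.2 ⟨i, j, hi, rfl⟩)
  rcases v with i | ⟨i, j, c⟩
  · by_cases hi : i = i₀
    · exact absurd (Or.inl (hi ▸ hx)) hv
    · exact absurd (Or.inr ⟨_, hx, Ne.symm hi⟩) hv
  · have hc : (c : ℕ) ≠ 0 := by
      intro hc
      obtain rfl : c = ⟨0, hk⟩ := Fin.ext hc
      by_cases hi : i = i₀
      · exact hv (Or.inr ⟨_, hx, hi, rfl⟩)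
      · exact hv (Or.inl (hy i j hi))
    by_cases hi : i = i₀
    · exact ⟨j, c, hc, hi ▸ rfl⟩
    · exact absurd (Or.inr ⟨_, hy i j hi, rfl, rfl, fun h => hc (h ▸ rfl)⟩) hv

theorem isIsolating_isolatingSet (hk : 0 < k) (i₀ : Fin t) :
    IsIsolating (GraphGts t s k) k ↑(isolatingSet (s := s) hk i₀) := by
  intro T hT hclique hcard
  have hout : ∀ v ∈ T, ∃ (j : Fin s) (c : Fin k), (c : ℕ) ≠ 0 ∧ v = .inr (i₀, j, c) :=
    fun v hv => exists_eq_inr_of_notMem_closedNbhd_isolatingSet hk fun h =>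
      Set.eq_empty_iff_forall_notMem.1 hT v ⟨hv, h⟩
  obtain ⟨v₀, hv₀⟩ := card_pos.1 (hcard ▸ hk)
  obtain ⟨j₀, c₀, -, rfl⟩ := hout v₀ hv₀
  have hsub : T ⊆ (copy i₀ j₀).erase (.inr (i₀, j₀, ⟨0, hk⟩)) := by
    intro v hv
    obtain ⟨j, c, hc, rfl⟩ := hout v hv
    have hj : j = j₀ := by
      by_contra hj
      exact hj (hclique hv hv₀ (by simp [hj])).2.1
    subst hj
    exact mem_erase.2 ⟨fun h => hc (by simp_all), mem_copy.2 ⟨c, rfl⟩⟩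
  have := card_le_card hsub
  rw [card_erase_of_mem (mem_copy.2 ⟨_, rfl⟩), card_copy] at this
  omega

end GraphGts

theorem stmt_13_general (t s k : ℕ) (ht : 0 < t) (hs : 0 < s) (hk : 0 < k) :
    iota' (GraphGts t s k) k = s * (t - 1) + 1 := by
  refine IsLeast.csInf_eq ⟨⟨GraphGts.isolatingSet hk ⟨0, ht⟩, GraphGts.card_isolatingSet hk _,
    GraphGts.isIsolating_isolatingSet hk _, GraphGts.isIndep_isolatingSet hk _⟩, ?_⟩
  rintro n ⟨S, rfl, hiso, hind⟩
  exact GraphGts.le_card_of_isIsolating_of_isIndep ht hs hk hiso hind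

/-- ι'_k(G(t,s)) = s(t − 1) + 1. -/
theorem stmt_13 (t s k : ℕ) (ht : 0 < t) (hs : 0 < s) (hk : 0 < k)
    (h : s + t - 1 ≥ k) :
    iota' (GraphGts t s k) k = s * (t - 1) + 1 :=
  stmt_13_general t s k ht hs hk
end

section
/- For positive integers t, r with r ≥ 3 and t + r − 3 ≥ k, the graph G(t, r − 2) is K_{1,r}-free and satisfies ι'_k(G(t, r−2)) = (r − 2)(ι_k(G(t, r−2)) − 1) + 1 = (r−2)(t−1) + 1, showing the bound ι'_k ≤ (r−2)(ι_k − 1) + 1 for K_{1,r}-free graphs is sharp. -/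
open SimpleGraph

variable {V : Type*}

/-! In `G(t,s)` the neighbourhood of every vertex is covered by `s + 1` cliques, so no vertex has
`s + 2` pairwise non-adjacent neighbours.

A `K_k`-isolating set must, for each copy `K^{i,i'}_k`, contain `xᵢ` or a vertex of that copy;
hence it has a vertex "owned" by each `i`, and if it is independent it contains at most one `xᵢ`
and so hits all `s` copies attached to each of the other `t - 1` indices. Conversely, a set whose
closed neighbourhood contains every `xᵢ` and every `y_{i,i'}` is isolating, since what is left is a
union of copies of `K_{k-1}`; both `{x₁,…,x_t}` and `{x₁} ∪ {y_{i,i'} : i ≠ 1}` are of this kind. -/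

theorem k1rFree_of_neighborSet_covered_by_cliques {G : SimpleGraph V} {m r : ℕ} (hmr : m < r)
    (hcover : ∀ v, ∃ f : V → Fin m,
      ∀ u w, G.Adj v u → G.Adj v w → u ≠ w → f u = f w → G.Adj u w) :
    K1rFree G r := by
  refine ⟨fun e => ?_⟩
  obtain ⟨f, hf⟩ := hcover (e (.inl 0))
  obtain ⟨j, j', hne, hjj'⟩ := Fintype.exists_ne_map_eq_of_card_lt
    (fun j : Fin r => f (e (.inr j))) (by simpa using hmr)
  have hcenter : ∀ j, G.Adj (e (.inl 0)) (e (.inr j)) := fun j =>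
    e.map_adj_iff.2 (by simp [completeBipartiteGraph])
  have hleaves := hf _ _ (hcenter j) (hcenter j') (e.injective.ne (Sum.inr_injective.ne hne)) hjj'
  simpa [completeBipartiteGraph] using e.map_adj_iff.1 hleaves

namespace GraphGts

variable {t s k : ℕ}

/-- The index `j` of a vertex inside its copy of `K_k`; the clique vertices get `0`, like the
attachment vertices `y_{i,i'}`. -/
def copyIndex : GtsVertex t s k → ℕ
  | .inl _ => 0
  | .inr (_, _, j) => j

def owner : GtsVertex t s k → Fin t
  | .inl i => i
  | .inr (i, _, _) => i

/-- The clique `{x₁,…,x_t}` gets label `0` and the copy `K^{i,i'}_k` label `i' + 1`. -/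
def cliqueLabel : GtsVertex t s k → Fin (s + 1)
  | .inl _ => 0
  | .inr (_, i', _) => i'.succ

theorem adj_of_cliqueLabel_eq {v u w : GtsVertex t s k} (hu : (GraphGts t s k).Adj v u)
    (hw : (GraphGts t s k).Adj v w) (huw : u ≠ w) (hlabel : cliqueLabel u = cliqueLabel w) :
    (GraphGts t s k).Adj u w := by
  rcases v with _ | ⟨_, _, _⟩ <;> rcases u with _ | ⟨_, _, _⟩ <;> rcases w with _ | ⟨_, _, _⟩ <;>
    simp_all [GraphGts, cliqueLabel, Fin.ext_iff]

theorem k1rFree {r : ℕ} (hr : s + 2 ≤ r) : K1rFree (GraphGts t s k) r :=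
  k1rFree_of_neighborSet_covered_by_cliques (m := s + 1) (by omega)
    fun _ => ⟨cliqueLabel, fun _ _ => adj_of_cliqueLabel_eq⟩

theorem card_lt_of_isClique {T : Finset (GtsVertex t s k)} (hk : 0 < k)
    (hT : (GraphGts t s k).IsClique (T : Set (GtsVertex t s k)))
    (hindex : ∀ v ∈ T, copyIndex v ≠ 0) : T.card < k := by
  have hmaps : ∀ v ∈ T, copyIndex v ∈ Finset.Ioo 0 k := by
    rintro (_ | ⟨_, _, j⟩) hv
    · exact absurd rfl (hindex _ hv)
    · simpa [copyIndex, Nat.pos_iff_ne_zero] using hindex _ hv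
  have hinj : Set.InjOn copyIndex (T : Set (GtsVertex t s k)) := by
    intro u hu w hw huw
    by_contra hne
    have hadj := hT hu hw hne
    rcases u with _ | ⟨_, _, _⟩ <;> rcases w with _ | ⟨_, _, _⟩ <;>
      simp_all [GraphGts, copyIndex, Fin.ext_iff]
  have := Finset.card_le_card_of_injOn copyIndex hmaps hinj
  simp only [Nat.card_Ioo] at this
  omega

theorem isIsolating_of_copyIndex_eq_zero (hk : 0 < k) {S : Set (GtsVertex t s k)}
    (hS : ∀ v, copyIndex v = 0 → v ∈ closedNbhd (GraphGts t s k) S) :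
    IsIsolating (GraphGts t s k) k S := by
  intro T hdisj hT
  refine (card_lt_of_isClique hk hT fun v hv hv0 => ?_).ne
  exact (Set.eq_empty_iff_forall_notMem.1 hdisj v) ⟨hv, hS v hv0⟩

theorem mem_or_exists_mem_copy {S : Finset (GtsVertex t s k)}
    (hS : IsIsolating (GraphGts t s k) k ↑S) (i : Fin t) (i' : Fin s) :
    .inl i ∈ S ∨ ∃ j, .inr (i, i', j) ∈ S := by
  by_contra! hmiss
  refine hS (Finset.univ.map ⟨fun j => .inr (i, i', j), fun _ _ h => by simpa using h⟩) ?_ ?_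
    (by simp)
  · refine Set.eq_empty_iff_forall_notMem.2 ?_
    rintro v ⟨hv, hvN⟩
    obtain ⟨j, -, rfl⟩ := Finset.mem_map.1 hv
    rcases hvN with hvS | ⟨u, huS, hadj⟩
    · exact hmiss.2 j hvS
    · change (GraphGts t s k).Adj u (.inr (i, i', j)) at hadj
      rcases u with _ | ⟨_, _, _⟩ <;> simp_all [GraphGts]
  · intro u hu w hw huw
    simp only [Finset.coe_map, Set.mem_image, Finset.mem_coe, Finset.mem_univ, true_and] at hu hw
    obtain ⟨j, rfl⟩ := hu
    obtain ⟨j', rfl⟩ := hw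
    exact ⟨rfl, rfl, fun h => huw (h ▸ rfl)⟩

theorem card_le_of_isIsolating (hs : 0 < s) {S : Finset (GtsVertex t s k)}
    (hS : IsIsolating (GraphGts t s k) k ↑S) : t ≤ S.card := by
  have himage : S.image owner = Finset.univ := by
    refine Finset.eq_univ_of_forall fun i => ?_
    rcases mem_or_exists_mem_copy hS i ⟨0, hs⟩ with h | ⟨j, h⟩ <;>
      exact Finset.mem_image_of_mem owner h
  simpa [himage] using Finset.card_image_le (s := S) (f := owner)

theorem card_le_of_isIsolating_of_isIndep (ht : 0 < t) (hs : 0 < s)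
    {S : Finset (GtsVertex t s k)} (hS : IsIsolating (GraphGts t s k) k ↑S)
    (hind : IsIndep (GraphGts t s k) ↑S) : s * (t - 1) + 1 ≤ S.card := by
  have hleft : S.toLeft.card ≤ 1 := Finset.card_le_one.2 fun a ha b hb => by
    by_contra hab
    exact hind (Finset.mem_toLeft.1 ha) (Finset.mem_toLeft.1 hb) (by simpa using hab) hab
  have hright : (Finset.univ \ S.toLeft).card * s ≤ S.toRight.card := by
    have hcover : (Finset.univ \ S.toLeft) ×ˢ Finset.univ ⊆
        S.toRight.image fun p => (p.1, p.2.1) := by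
      rintro ⟨i, i'⟩ hii'
      have hi : Sum.inl i ∉ S := by simpa using hii'
      obtain ⟨j, hj⟩ := (mem_or_exists_mem_copy hS i i').resolve_left hi
      exact Finset.mem_image.2 ⟨(i, i', j), Finset.mem_toRight.2 hj, rfl⟩
    simpa using (Finset.card_le_card hcover).trans Finset.card_image_le
  rw [Finset.card_univ_sdiff, Fintype.card_fin] at hright
  rw [← Finset.card_toLeft_add_card_toRight]
  interval_cases S.toLeft.card
  · obtain ⟨t, rfl⟩ := Nat.exists_eq_add_of_lt ht
    simp only [Nat.sub_zero, zero_add, add_tsub_cancel_right] at hright ⊢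
    nlinarith
  · nlinarith

theorem iota_eq (hs : 0 < s) (hk : 0 < k) : iota (GraphGts t s k) k = t := by
  refine IsLeast.csInf_eq ⟨⟨Finset.univ.disjSum ∅, by simp, ?_⟩, ?_⟩
  · refine isIsolating_of_copyIndex_eq_zero hk ?_
    rintro (i | ⟨i, _, j⟩) hj
    · exact .inl (by simp)
    · exact .inr ⟨.inl i, by simp, rfl, hj⟩
  · rintro n ⟨S, rfl, hS⟩
    exact card_le_of_isIsolating hs hS

theorem iota'_eq (ht : 0 < t) (hs : 0 < s) (hk : 0 < k) :
    iota' (GraphGts t s k) k = s * (t - 1) + 1 := by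
  let i₀ : Fin t := ⟨0, ht⟩
  let S : Finset (GtsVertex t s k) :=
    Finset.disjSum {i₀} ((Finset.univ.erase i₀) ×ˢ Finset.univ ×ˢ {⟨0, hk⟩})
  refine IsLeast.csInf_eq ⟨⟨S, ?_, ?_, ?_⟩, ?_⟩
  · simp [S, mul_comm, add_comm]
  · refine isIsolating_of_copyIndex_eq_zero hk ?_
    rintro (i | ⟨i, i', j⟩) hj <;> by_cases hi : i = i₀
    · exact .inl (by simp [S, hi])
    · exact .inr ⟨.inl i₀, by simp [S], Ne.symm hi⟩
    · exact .inr ⟨.inl i₀, by simp [S], hi, hj⟩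
    · exact .inl (by simpa [S, hi, Fin.ext_iff, copyIndex, eq_comm] using hj)
  · rintro (_ | ⟨_, _, _⟩) hu (_ | ⟨_, _, _⟩) hw hne <;> simp_all [S, GraphGts]
  · rintro n ⟨S, rfl, hS, hind⟩
    exact card_le_of_isIsolating_of_isIndep ht hs hS hind

end GraphGts

theorem stmt_15_general (t r k : ℕ) (ht : 0 < t) (hr : 3 ≤ r) (hk : 0 < k) :
    K1rFree (GraphGts t (r - 2) k) r ∧
    iota' (GraphGts t (r - 2) k) k = (r - 2) * (iota (GraphGts t (r - 2) k) k - 1) + 1 ∧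
    iota' (GraphGts t (r - 2) k) k = (r - 2) * (t - 1) + 1 := by
  have hs : 0 < r - 2 := by omega
  refine ⟨GraphGts.k1rFree (by omega), ?_, ?_⟩ <;>
    rw [GraphGts.iota'_eq ht hs hk]
  rw [GraphGts.iota_eq hs hk]

/-- G(t, r − 2) is K_{1,r}-free and attains ι'_k = (r − 2)(ι_k − 1) + 1 = (r − 2)(t − 1) + 1. -/
theorem stmt_15 (t r k : ℕ) (ht : 0 < t) (hr : 3 ≤ r) (hk : 0 < k)
    (h : t + r - 3 ≥ k) :
    K1rFree (GraphGts t (r - 2) k) r ∧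
    iota' (GraphGts t (r - 2) k) k = (r - 2) * (iota (GraphGts t (r - 2) k) k - 1) + 1 ∧
    iota' (GraphGts t (r - 2) k) k = (r - 2) * (t - 1) + 1 :=
  stmt_15_general t r k ht hr hk
end
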